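/- Let L be a sublattice of the Boolean lattice on [n] (closed under union and intersection) with ∅ ∈ L and [n] ∈ L. Then there exists an unmixed bipartite graph G on {x_1,...,x_n} ∪ {y_1,...,y_n} such that the minimal vertex covers of G are exactly the sets {x_i : i ∈ S} ∪ {y_j : j ∉ S} for S ∈ L. -/

import Mathlib

open Finset

/-- `C` is a vertex cover of the graph `G`. -/
def IsVC {α : Type*} (G : SimpleGraph α) (C : Finset α) : Prop :=
  ∀ ⦃u v : α⦄, G.Adj u v → u ∈ C ∨ v ∈ C

/-- `C` is a minimal vertex cover of the graph `G`. -/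
def IsMinVC {α : Type*} (G : SimpleGraph α) (C : Finset α) : Prop :=
  IsVC G C ∧ ∀ C' ⊂ C, ¬ IsVC G C'

/-- `G` is unmixed: all minimal vertex covers have the same cardinality. -/
def Unmixed {α : Type*} (G : SimpleGraph α) : Prop :=
  ∀ C C' : Finset α, IsMinVC G C → IsMinVC G C' → C.card = C'.card

/-- `G` is bipartite with respect to the given sum decomposition of its vertex set:
all edges go between the two parts. -/
def Bip {m n : ℕ} (G : SimpleGraph (Fin m ⊕ Fin n)) : Prop :=
  (∀ i j, ¬ G.Adj (Sum.inl i) (Sum.inl j)) ∧ ∀ i j, ¬ G.Adj (Sum.inr i) (Sum.inr j)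

/-- the set `{x_i : i ∈ S} ∪ {y_j : j ∉ S}`, where `x_i = Sum.inl i`, `y_j = Sum.inr j`. -/
def coverOf {n : ℕ} (S : Finset (Fin n)) : Finset (Fin n ⊕ Fin n) :=
  S.image Sum.inl ∪ Sᶜ.image Sum.inr

/-- the "x-part" `C̄ = {i : x_i ∈ C}` of a set of vertices `C`. -/
def xpart {n : ℕ} (C : Finset (Fin n ⊕ Fin n)) : Finset (Fin n) :=
  Finset.univ.filter fun i => Sum.inl i ∈ C

/-! Preorder `[n]` by `i ≼ j` iff every member of `L` containing `j` contains `i`, and join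
`x_i` to `y_j` whenever `i ≼ j`. Members of `L` are down-sets of `≼`, so `coverOf S` is a cover
for `S ∈ L`. Any cover `C` contains `coverOf S` for the down-set `S` generated by
`{j : y_j ∉ C}`, a union of principal down-sets, each of which is an intersection of members of
`L`; so `S ∈ L`, `L` being closed under finite unions and intersections (the empty ones being `∅`
and `[n]`). Conversely, since `i ≼ i`, every cover meets each pair `{x_i, y_i}`, so no cover lies
strictly inside a `coverOf S`. Hence the minimal covers are exactly the `coverOf S` with `S ∈ L`,
all of size `n`. -/

variable {n : ℕ}

lemma mem_coverOf_inl (S : Finset (Fin n)) (i : Fin n) : Sum.inl i ∈ coverOf S ↔ i ∈ S := by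
  simp [coverOf]

lemma mem_coverOf_inr (S : Finset (Fin n)) (j : Fin n) : Sum.inr j ∈ coverOf S ↔ j ∉ S := by
  simp [coverOf]

lemma card_coverOf (S : Finset (Fin n)) : (coverOf S).card = n := by
  have hdisj : Disjoint (S.image Sum.inl) (Sᶜ.image (Sum.inr : Fin n → Fin n ⊕ Fin n)) := by
    simp [disjoint_left]
  rw [coverOf, card_union_of_disjoint hdisj, card_image_of_injective _ Sum.inl_injective,
    card_image_of_injective _ Sum.inr_injective, card_add_card_compl, Fintype.card_fin]

lemma coverOf_subset_of_isVC {G : SimpleGraph (Fin n ⊕ Fin n)}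
    (hmatch : ∀ i, G.Adj (Sum.inl i) (Sum.inr i)) {C : Finset (Fin n ⊕ Fin n)}
    {S : Finset (Fin n)} (hC : IsVC G C) (hsub : C ⊆ coverOf S) : coverOf S ⊆ C := by
  rintro (i | i) hi
  · rcases hC (hmatch i) with h | h
    · exact h
    · exact absurd ((mem_coverOf_inl S i).mp hi) ((mem_coverOf_inr S i).mp (hsub h))
  · rcases hC (hmatch i) with h | h
    · exact absurd ((mem_coverOf_inl S i).mp (hsub h)) ((mem_coverOf_inr S i).mp hi)
    · exact h

section LatticeGraph

variable (L : Set (Finset (Fin n)))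

def LatticeLE (i j : Fin n) : Prop := ∀ S ∈ L, j ∈ S → i ∈ S

lemma latticeLE_refl (i : Fin n) : LatticeLE L i i := fun _ _ h => h

def latticeGraph : SimpleGraph (Fin n ⊕ Fin n) where
  Adj
    | .inl i, .inr j => LatticeLE L i j
    | .inr j, .inl i => LatticeLE L i j
    | _, _ => False
  symm := ⟨by rintro (i | j) (i' | j') h <;> exact h⟩
  loopless := ⟨by rintro (i | j) h <;> exact h⟩

@[simp]
lemma latticeGraph_adj_inl_inr (i j : Fin n) :
    (latticeGraph L).Adj (Sum.inl i) (Sum.inr j) ↔ LatticeLE L i j := Iff.rfl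

lemma bip_latticeGraph : Bip (latticeGraph L) := ⟨fun _ _ h => h, fun _ _ h => h⟩

lemma isVC_latticeGraph_coverOf {S : Finset (Fin n)} (hS : S ∈ L) :
    IsVC (latticeGraph L) (coverOf S) := by
  suffices ∀ i j, LatticeLE L i j → Sum.inl i ∈ coverOf S ∨ Sum.inr j ∈ coverOf S by
    rintro (i | j) (i' | j') h
    exacts [h.elim, this i j' h, (this i' j h).symm, h.elim]
  intro i j hij
  rw [mem_coverOf_inl, mem_coverOf_inr]
  by_cases hj : j ∈ S
  · exact .inl (hij S hS hj)
  · exact .inr hj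

open Classical in
noncomputable def latticeIic (j : Fin n) : Finset (Fin n) :=
  (univ.filter fun S => S ∈ L ∧ j ∈ S).inf id

lemma mem_latticeIic {i j : Fin n} : i ∈ latticeIic L j ↔ LatticeLE L i j := by
  simp [latticeIic, LatticeLE, mem_inf]

variable {L}
variable (hbot : ∅ ∈ L) (htop : univ ∈ L)
  (hlat : ∀ S ∈ L, ∀ T ∈ L, S ∪ T ∈ L ∧ S ∩ T ∈ L)

include htop hlat in
lemma latticeIic_mem (j : Fin n) : latticeIic L j ∈ L :=
  inf_mem L htop (fun S hS T hT => (hlat S hS T hT).2) _ _ fun S hS => by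
    classical exact (mem_filter.mp hS).2.1

include hbot htop hlat in
lemma exists_coverOf_subset_of_isVC {C : Finset (Fin n ⊕ Fin n)} (hC : IsVC (latticeGraph L) C) :
    ∃ S ∈ L, coverOf S ⊆ C := by
  classical
  let S := (univ.filter fun j => Sum.inr j ∉ C).sup (latticeIic L)
  refine ⟨S, sup_mem L hbot (fun S hS T hT => (hlat S hS T hT).1) _ _
    fun j _ => latticeIic_mem htop hlat j, ?_⟩
  rintro (i | j) hv
  · obtain ⟨j, hj, hij⟩ := mem_sup.mp ((mem_coverOf_inl S i).mp hv)
    have hadj := (latticeGraph_adj_inl_inr L i j).mpr ((mem_latticeIic L).mp hij)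
    exact (hC hadj).resolve_right (mem_filter.mp hj).2
  · by_contra hj
    exact (mem_coverOf_inr S j).mp hv <|
      mem_sup.mpr ⟨j, by simpa using hj, (mem_latticeIic L).mpr (latticeLE_refl L j)⟩

include hbot htop hlat in
lemma isMinVC_latticeGraph_iff (C : Finset (Fin n ⊕ Fin n)) :
    IsMinVC (latticeGraph L) C ↔ ∃ S ∈ L, C = coverOf S := by
  have hmatch (i : Fin n) := (latticeGraph_adj_inl_inr L i i).mpr (latticeLE_refl L i)
  constructor
  · rintro ⟨hC, hmin⟩
    obtain ⟨S, hS, hsub⟩ := exists_coverOf_subset_of_isVC hbot htop hlat hC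
    refine ⟨S, hS, ?_⟩
    by_contra hne
    exact hmin _ (Finset.ssubset_iff_subset_ne.mpr ⟨hsub, Ne.symm hne⟩)
      (isVC_latticeGraph_coverOf L hS)
  · rintro ⟨S, hS, rfl⟩
    exact ⟨isVC_latticeGraph_coverOf L hS, fun C' hC' hvc =>
      hC'.2 (coverOf_subset_of_isVC hmatch hvc hC'.1)⟩

end LatticeGraph

/-- every sublattice of the Boolean lattice containing `∅` and `[n]`
arises as the lattice of minimal vertex covers of an unmixed bipartite graph. -/
theorem stmt_6 {n : ℕ} (L : Set (Finset (Fin n)))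
    (hbot : (∅ : Finset (Fin n)) ∈ L) (htop : (Finset.univ : Finset (Fin n)) ∈ L)
    (hlat : ∀ S ∈ L, ∀ T ∈ L, S ∪ T ∈ L ∧ S ∩ T ∈ L) :
    ∃ G : SimpleGraph (Fin n ⊕ Fin n), Bip G ∧ Unmixed G ∧
      ∀ C : Finset (Fin n ⊕ Fin n), IsMinVC G C ↔ ∃ S ∈ L, C = coverOf S := by
  have hmin := isMinVC_latticeGraph_iff hbot htop hlat
  refine ⟨latticeGraph L, bip_latticeGraph L, fun C C' hC hC' => ?_, hmin⟩
  obtain ⟨S, -, rfl⟩ := (hmin C).mp hC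
  obtain ⟨S', -, rfl⟩ := (hmin C').mp hC'
  rw [card_coverOf, card_coverOf]
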